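/- arXiv:math/9406224 — 2 statements merged into one kernel-verified Lean document; each statement's English description precedes it below -/
import Mathlib

section
/- Let (α_n) be a sequence with α_n > −1 such that α_n/n → a for some a ≥ 0 as n → ∞. Let r_n and s_n denote, respectively, the smallest and largest zero of L_n^{(α_n)}. Then lim_{n→∞} s_n/n = 2 + a + 2√(1+a) and lim_{n→∞} r_n/n = 2 + a − 2√(1+a). Moreover, the closure of the set ⋃_{n≥1} { x/n : L_n^{(α_n)}(x) = 0 } contains the interval [2 + a − 2√(1+a), 2 + a + 2√(1+a)]. -/
open Filter Topology

/-- Generalized binomial coefficient C(t, m) = t(t-1)⋯(t-m+1)/m! for real t. -/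
noncomputable def genBinom (t : ℝ) (m : ℕ) : ℝ :=
  (∏ i ∈ Finset.range m, (t - (i : ℝ))) / (Nat.factorial m)

/-- Laguerre polynomial L_n^{(α)}. -/
noncomputable def laguerreL (n : ℕ) (α : ℝ) (x : ℝ) : ℝ :=
  ∑ k ∈ Finset.range (n + 1),
    (-1) ^ k * genBinom ((n : ℝ) + α) (n - k) * x ^ k / (Nat.factorial k)

/-- Number of zeros of L_n^{(α)} that are ≤ ξ. -/
noncomputable def laguerreN (n : ℕ) (α ξ : ℝ) : ℕ :=
  {x : ℝ | laguerreL n α x = 0 ∧ x ≤ ξ}.ncard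

open Polynomial

namespace Lag

noncomputable def co (n : ℕ) (α : ℝ) (k : ℕ) : ℝ :=
  (-1) ^ k * genBinom ((n : ℝ) + α) (n - k) / (Nat.factorial k)

noncomputable def P (n : ℕ) (α : ℝ) : Polynomial ℝ :=
  ∑ k ∈ Finset.range (n+1), Polynomial.C (co n α k) * Polynomial.X ^ k

lemma eval_P (n : ℕ) (α : ℝ) (x : ℝ) : (P n α).eval x = laguerreL n α x := by
  simp only [P, laguerreL, eval_finset_sum, eval_mul, eval_C, eval_pow, eval_X, co]
  exact Finset.sum_congr rfl fun k _ => by ring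

lemma coeff_P (n : ℕ) (α : ℝ) (k : ℕ) :
    (P n α).coeff k = if k ≤ n then co n α k else 0 := by
  simp only [P, finset_sum_coeff, coeff_C_mul, coeff_X_pow]
  simp only [mul_ite, mul_one, mul_zero]
  rw [Finset.sum_ite_eq]
  simp [Nat.lt_succ_iff]

lemma genBinom_succ (t : ℝ) (m : ℕ) :
    genBinom t (m+1) = genBinom t m * (t - m) / (m+1) := by
  simp only [genBinom, Finset.prod_range_succ, Nat.factorial_succ]
  push_cast
  rw [div_mul_eq_mul_div, div_div]
  ring

lemma genBinom_pos {α : ℝ} (hα : α > -1) (n k : ℕ) :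
    0 < genBinom ((n:ℝ) + α) (n - k) := by
  apply div_pos
  · apply Finset.prod_pos
    intro i hi
    rw [Finset.mem_range] at hi
    have hin : i < n := lt_of_lt_of_le hi (Nat.sub_le n k)
    have h1 : (i:ℝ) + 1 ≤ n := by exact_mod_cast Nat.succ_le_of_lt hin
    linarith
  · positivity

lemma L_pos_of_nonpos {n : ℕ} {α : ℝ} (hα : α > -1) {x : ℝ} (hx : x ≤ 0) :
    0 < laguerreL n α x := by
  unfold laguerreL
  apply Finset.sum_pos'
  · intro k _
    have h1 : (-1:ℝ)^k * genBinom ((n:ℝ)+α) (n-k) * x ^ k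
        = genBinom ((n:ℝ)+α) (n-k) * (-x) ^ k := by
      rw [neg_pow]; ring
    rw [div_nonneg_iff]
    left
    constructor
    · rw [h1]
      exact mul_nonneg (genBinom_pos hα n k).le (pow_nonneg (by linarith) k)
    · positivity
  · refine ⟨0, Finset.mem_range.2 (Nat.succ_pos n), ?_⟩
    have := genBinom_pos hα n 0
    simp only [pow_zero, one_mul]
    positivity

lemma zero_pos {n : ℕ} {α : ℝ} (hα : α > -1) {x : ℝ} (hx : laguerreL n α x = 0) :
    0 < x := by
  by_contra h
  push_neg at h
  exact absurd hx (ne_of_gt (L_pos_of_nonpos hα h))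

lemma co_rec (n : ℕ) (α : ℝ) (hα : α > -1) (k : ℕ) (h : k < n) :
    ((k:ℝ)+1) * ((k:ℝ)+1+α) * co n α (k+1) = ((k:ℝ) - n) * co n α k := by
  have hk1 : k + 1 ≤ n := h
  have hm : n - k = (n - (k+1)) + 1 := by omega
  have hc1 : ((n - (k+1) : ℕ):ℝ) = (n:ℝ) - (k:ℝ) - 1 := by
    rw [Nat.cast_sub hk1]; push_cast; ring
  have hne1 : α + (k:ℝ) + 1 ≠ 0 := by
    have : (0:ℝ) ≤ k := Nat.cast_nonneg k
    intro hc; linarith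
  have hne2 : (n:ℝ) - k ≠ 0 := by
    have : (k:ℝ)+1 ≤ n := by exact_mod_cast hk1
    intro hc; linarith
  have e1 : genBinom ((n:ℝ)+α) (n-k)
      = genBinom ((n:ℝ)+α) (n-(k+1)) * (α + k + 1) / ((n:ℝ) - k) := by
    rw [hm, genBinom_succ, hc1]; ring_nf
  have e2 : genBinom ((n:ℝ)+α) (n-(k+1))
      = genBinom ((n:ℝ)+α) (n-k) * ((n:ℝ) - k) / (α + k + 1) := by
    rw [e1]; field_simp
  unfold co
  rw [e2, pow_succ]
  have hfact : ((Nat.factorial (k+1) : ℕ):ℝ) = ((k:ℝ)+1) * (Nat.factorial k : ℝ) := by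
    rw [Nat.factorial_succ]; push_cast; ring
  rw [hfact]
  have hfk : (Nat.factorial k : ℝ) ≠ 0 := by positivity
  field_simp
  ring

lemma coeff_rec (n : ℕ) (α : ℝ) (hα : α > -1) (k : ℕ) :
    ((k:ℝ)+1) * ((k:ℝ)+1+α) * (P n α).coeff (k+1) = ((k:ℝ) - n) * (P n α).coeff k := by
  rcases lt_trichotomy k n with h | h | h
  · rw [coeff_P, coeff_P, if_pos (by omega : k + 1 ≤ n), if_pos (le_of_lt h)]
    exact co_rec n α hα k h
  · subst h
    rw [coeff_P, coeff_P, if_neg (by omega), if_pos (le_refl k)]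
    simp
  · rw [coeff_P, coeff_P, if_neg (by omega), if_neg (by omega)]
    simp

lemma ode_poly (n : ℕ) (α : ℝ) (hα : α > -1) :
    X * derivative (derivative (P n α)) + (Polynomial.C (α+1) - X) * derivative (P n α)
      + Polynomial.C (n:ℝ) * P n α = 0 := by
  ext k
  simp only [coeff_add, coeff_zero, sub_mul, coeff_sub, coeff_C_mul]
  rw [mul_comm X (derivative (derivative (P n α))), mul_comm X (derivative (P n α))]
  cases k with
  | zero =>
    rw [Polynomial.coeff_mul_X_zero, Polynomial.coeff_mul_X_zero]
    have h0 := coeff_rec n α hα 0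
    simp only [Polynomial.coeff_derivative] at *
    push_cast at h0 ⊢
    linear_combination h0
  | succ k =>
    rw [Polynomial.coeff_mul_X, Polynomial.coeff_mul_X]
    have h1 := coeff_rec n α hα (k+1)
    simp only [Polynomial.coeff_derivative] at *
    push_cast at h1 ⊢
    linear_combination h1

noncomputable def Af (α : ℝ) : ℝ → ℝ := fun x => Real.exp (-x/2) * x ^ ((α+1)/2)

noncomputable def uu (n : ℕ) (α : ℝ) : ℝ → ℝ := fun x => Af α x * (P n α).eval x

noncomputable def du (n : ℕ) (α : ℝ) : ℝ → ℝ :=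
  fun x => Af α x * ((-1/2 + ((α+1)/2)/x) * (P n α).eval x + (derivative (P n α)).eval x)

noncomputable def Qf (n : ℕ) (α : ℝ) : ℝ → ℝ :=
  fun x => (2*(n:ℝ) + α + 1)/(2*x) - 1/4 + (1 - α^2)/(4*x^2)

lemma Af_pos (α : ℝ) {x : ℝ} (hx : 0 < x) : 0 < Af α x := by
  unfold Af
  positivity

lemma hasDerivAt_Af (α : ℝ) {x : ℝ} (hx : 0 < x) :
    HasDerivAt (Af α) (Af α x * (-1/2 + ((α+1)/2)/x)) x := by
  have h1 : HasDerivAt (fun x : ℝ => Real.exp (-x/2)) (Real.exp (-x/2) * (-1/2)) x := by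
    have := (Real.hasDerivAt_exp (-x/2)).comp x (((hasDerivAt_id x).neg).div_const 2)
    exact this
  have h2 : HasDerivAt (fun x : ℝ => x ^ ((α+1)/2)) (((α+1)/2) * x ^ ((α+1)/2 - 1)) x :=
    Real.hasDerivAt_rpow_const (Or.inl (ne_of_gt hx))
  have h3 := h1.mul h2
  have hxne : x ≠ 0 := ne_of_gt hx
  unfold Af
  refine h3.congr_deriv ?_
  rw [Real.rpow_sub hx, Real.rpow_one]
  field_simp

lemma hasDerivAt_uu (n : ℕ) (α : ℝ) {x : ℝ} (hx : 0 < x) :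
    HasDerivAt (uu n α) (du n α x) x := by
  have hL : HasDerivAt (fun y => (P n α).eval y) ((derivative (P n α)).eval x) x :=
    (P n α).hasDerivAt x
  have := (hasDerivAt_Af α hx).mul hL
  unfold uu du
  refine this.congr_deriv ?_
  ring

lemma eval_ode (n : ℕ) (α : ℝ) (hα : α > -1) (x : ℝ) :
    x * (derivative (derivative (P n α))).eval x
      + (α + 1 - x) * (derivative (P n α)).eval x + (n:ℝ) * (P n α).eval x = 0 := by
  have := congrArg (eval x) (ode_poly n α hα)
  simpa using this

lemma hasDerivAt_du (n : ℕ) (α : ℝ) (hα : α > -1) {x : ℝ} (hx : 0 < x) :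
    HasDerivAt (du n α) (-(Qf n α x) * uu n α x) x := by
  have hxne : x ≠ 0 := ne_of_gt hx
  have hL : HasDerivAt (fun y => (P n α).eval y) ((derivative (P n α)).eval x) x :=
    (P n α).hasDerivAt x
  have hL1 : HasDerivAt (fun y => (derivative (P n α)).eval y)
      ((derivative (derivative (P n α))).eval x) x := (derivative (P n α)).hasDerivAt x
  have hg : HasDerivAt (fun y : ℝ => -1/2 + ((α+1)/2)/y) (-(((α+1)/2)/x^2)) x := by
    have h4 : HasDerivAt (fun y : ℝ => ((α+1)/2)/y) (((α+1)/2) * (-(x^2)⁻¹)) x := by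
      simpa [div_eq_mul_inv] using (hasDerivAt_inv hxne).const_mul ((α+1)/2)
    have := (hasDerivAt_const x (-1/2 : ℝ)).add h4
    refine this.congr_deriv ?_
    field_simp
    ring
  have hG := (hg.mul hL).add hL1
  have hdu := (hasDerivAt_Af α hx).mul hG
  unfold du at hdu ⊢
  refine hdu.congr_deriv ?_
  simp only [Pi.add_apply, Pi.mul_apply]
  have hode := eval_ode n α hα x
  set L0 := (P n α).eval x
  set L1 := (derivative (P n α)).eval x
  set L2 := (derivative (derivative (P n α))).eval x
  have hL2 : L2 = ((x - α - 1) * L1 - (n:ℝ) * L0) / x := by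
    field_simp
    linarith [hode]
  rw [hL2]
  unfold Qf uu Af
  field_simp
  ring

lemma cont_uu (n : ℕ) (α : ℝ) (hα : α > -1) : Continuous (uu n α) := by
  unfold uu Af
  exact (((Real.continuous_exp.comp (by fun_prop)).mul
    (Real.continuous_rpow_const (by linarith))).mul (P n α).continuous)

lemma uu_zero (n : ℕ) (α : ℝ) (hα : α > -1) : uu n α 0 = 0 := by
  unfold uu Af
  rw [Real.zero_rpow (ne_of_gt (by linarith : (0:ℝ) < (α+1)/2))]
  ring

lemma uu_eq_zero_iff (n : ℕ) (α : ℝ) {x : ℝ} (hx : 0 < x) :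
    uu n α x = 0 ↔ (P n α).eval x = 0 := by
  unfold uu
  constructor
  · intro h
    rcases mul_eq_zero.1 h with h | h
    · exact absurd h (ne_of_gt (Af_pos α hx))
    · exact h
  · intro h; rw [h, mul_zero]

lemma deriv_ev (n : ℕ) (α : ℝ) (ε : ℝ) {x : ℝ} (hx : 0 < x) :
    deriv (fun y => ε * uu n α y) =ᶠ[𝓝 x] (fun y => ε * du n α y) := by
  filter_upwards [isOpen_Ioi.mem_nhds hx] with y hy
  exact (((hasDerivAt_uu n α hy).const_mul ε)).deriv

lemma convexOn_ev (n : ℕ) (α : ℝ) (hα : α > -1) (ε : ℝ) {l r : ℝ} (hl : 0 ≤ l)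
    (hQ : ∀ x ∈ Set.Ioo l r, Qf n α x ≤ 0)
    (hpos : ∀ x ∈ Set.Ioo l r, 0 ≤ ε * uu n α x) :
    ConvexOn ℝ (Set.Icc l r) (fun x => ε * uu n α x) := by
  have hint : interior (Set.Icc l r) = Set.Ioo l r := interior_Icc
  apply convexOn_of_deriv2_nonneg (convex_Icc l r)
    (continuous_const.mul (cont_uu n α hα)).continuousOn
  · rw [hint]; intro x hx
    exact (((hasDerivAt_uu n α (lt_of_le_of_lt hl hx.1)).const_mul ε)).differentiableAt.differentiableWithinAt
  · rw [hint]; intro x hx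
    have hx0 : 0 < x := lt_of_le_of_lt hl hx.1
    have : DifferentiableAt ℝ (deriv (fun y => ε * uu n α y)) x := by
      rw [Filter.EventuallyEq.differentiableAt_iff (deriv_ev n α ε hx0)]
      exact ((hasDerivAt_du n α hα hx0).const_mul ε).differentiableAt
    exact this.differentiableWithinAt
  · rw [hint]; intro x hx
    have hx0 : 0 < x := lt_of_le_of_lt hl hx.1
    have h2 : deriv^[2] (fun y => ε * uu n α y) x = ε * (-(Qf n α x) * uu n α x) := by
      simp only [Function.iterate_succ_apply', Function.iterate_zero_apply, Function.iterate_one]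
      rw [Filter.EventuallyEq.deriv_eq (deriv_ev n α ε hx0)]
      exact ((hasDerivAt_du n α hα hx0).const_mul ε).deriv
    rw [show deriv^[2] ((fun _ => ε) * uu n α) x = _ from h2]
    have h3 := hQ x hx
    have h4 := hpos x hx
    nlinarith

lemma uu_tendsto_atTop (n : ℕ) (α : ℝ) : Tendsto (uu n α) atTop (𝓝 0) := by
  have key : (fun x : ℝ => ∑ k ∈ Finset.range (n+1),
          co n α k * (x ^ ((α+1)/2 + (k:ℕ)) * Real.exp (-(1/2) * x))) =ᶠ[atTop] uu n α := by
    filter_upwards [eventually_gt_atTop (0:ℝ)] with x hx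
    unfold uu Af
    rw [show (P n α).eval x = ∑ k ∈ Finset.range (n+1), co n α k * x ^ k from by
      rw [eval_P]; unfold laguerreL co; exact Finset.sum_congr rfl fun k _ => by ring]
    rw [Finset.mul_sum]
    refine Finset.sum_congr rfl fun k _ => ?_
    rw [Real.rpow_add hx, Real.rpow_natCast]
    rw [show -(1/2:ℝ) * x = -x/2 by ring]
    ring
  rw [show (0:ℝ) = ∑ k ∈ Finset.range (n+1), co n α k * 0 from by simp]
  apply Tendsto.congr' key
  apply tendsto_finset_sum
  intro k _
  exact (tendsto_rpow_mul_exp_neg_mul_atTop_nhds_zero ((α+1)/2 + (k:ℝ)) (1/2)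
    (by norm_num)).const_mul _

lemma sign_dichotomy (n : ℕ) (α : ℝ) (hα : α > -1) {s : Set ℝ} (hconv : Convex ℝ s)
    (hne : ∀ x ∈ s, uu n α x ≠ 0) {x0 : ℝ} (hx0 : x0 ∈ s) (hpos : 0 < uu n α x0) :
    ∀ x ∈ s, 0 < uu n α x := by
  intro x hx
  by_contra hle
  push_neg at hle
  have hlt : uu n α x < 0 := lt_of_le_of_ne hle (hne x hx)
  have hsub : Set.uIcc x x0 ⊆ s := hconv.ordConnected.uIcc_subset hx hx0
  have := intermediate_value_uIcc ((cont_uu n α hα).continuousOn (s := Set.uIcc x x0))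
  have h0 : (0:ℝ) ∈ Set.uIcc (uu n α x) (uu n α x0) :=
    Set.mem_uIcc.2 (Or.inl ⟨le_of_lt hlt, le_of_lt hpos⟩)
  obtain ⟨y, hy, hy0⟩ := this h0
  exact hne y (hsub hy) hy0

lemma contradiction_below (n : ℕ) (α : ℝ) (hα : α > -1) {z : ℝ} (hz : 0 < z)
    (h0 : uu n α z = 0)
    (hne : ∀ x ∈ Set.Ioo (0:ℝ) z, uu n α x ≠ 0)
    (hQ : ∀ x ∈ Set.Ioo (0:ℝ) z, Qf n α x ≤ 0) : False := by
  have hx0 : z/2 ∈ Set.Ioo (0:ℝ) z := ⟨by linarith, by linarith⟩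
  have hdich : (0 < uu n α (z/2)) ∨ (uu n α (z/2) < 0) :=
    (hne _ hx0).lt_or_gt.symm
  have key : ∀ ε : ℝ, (ε = 1 ∨ ε = -1) → (∀ x ∈ Set.Ioo (0:ℝ) z, 0 < ε * uu n α x) → False := by
    intro ε hε hsgn
    have hconv := convexOn_ev n α hα ε (le_refl 0) hQ (fun x hx => (hsgn x hx).le)
    have hmem : z/2 ∈ segment ℝ (0:ℝ) z := by
      rw [segment_eq_Icc (le_of_lt hz)]
      exact ⟨by linarith, by linarith⟩
    have := hconv.le_on_segment (Set.left_mem_Icc.2 hz.le) (Set.right_mem_Icc.2 hz.le) hmem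
    simp only [uu_zero n α hα, h0, mul_zero, max_self] at this
    exact absurd this (not_le.2 (hsgn _ hx0))
  rcases hdich with hpos | hneg
  · refine key 1 (Or.inl rfl) ?_
    intro x hx
    rw [one_mul]
    exact sign_dichotomy n α hα (convex_Ioo 0 z) hne hx0 hpos x hx
  · refine key (-1) (Or.inr rfl) ?_
    intro x hx
    have : ∀ y ∈ Set.Ioo (0:ℝ) z, uu n α y ≠ 0 → True := fun _ _ _ => trivial
    -- apply sign_dichotomy to -uu:  0 < uu is false; do directly
    by_contra hle
    push_neg at hle
    have hlt : 0 < uu n α x := by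
      rcases (hne x hx).lt_or_gt with h | h
      · nlinarith
      · exact h
    have := sign_dichotomy n α hα (convex_Ioo 0 z) hne hx hlt _ hx0
    linarith

lemma contradiction_beyond (n : ℕ) (α : ℝ) (hα : α > -1) {z : ℝ} (hz : 0 < z)
    (h0 : uu n α z = 0)
    (hne : ∀ x, z < x → uu n α x ≠ 0)
    (hQ : ∀ x, z < x → Qf n α x ≤ 0) : False := by
  have hne' : ∀ x ∈ Set.Ioi z, uu n α x ≠ 0 := fun x hx => hne x hx
  have hx0 : z + 1 ∈ Set.Ioi z := by simp
  have hdich : (0 < uu n α (z+1)) ∨ (uu n α (z+1) < 0) := (hne' _ hx0).lt_or_gt.symm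
  have key : ∀ ε : ℝ, (∀ x ∈ Set.Ioi z, 0 < ε * uu n α x) → False := by
    intro ε hsgn
    -- find T with ε * uu T < ε * uu (z+1)
    have htend : Tendsto (fun x => ε * uu n α x) atTop (𝓝 0) := by
      simpa using (uu_tendsto_atTop n α).const_mul ε
    have hev : ∀ᶠ x in atTop, ε * uu n α x < ε * uu n α (z+1) := by
      have := htend.eventually (eventually_lt_nhds (hsgn _ hx0))
      exact this
    obtain ⟨T, hT1, hT2⟩ := (hev.and (eventually_ge_atTop (z+2))).exists
    have hzT : z ≤ T := by linarith
    have hconv := convexOn_ev n α hα ε (l := z) (r := T) hz.le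
      (fun x hx => hQ x hx.1) (fun x hx => (hsgn x hx.1).le)
    have hmem : z + 1 ∈ segment ℝ z T := by
      rw [segment_eq_Icc hzT]
      exact ⟨by linarith, by linarith⟩
    have hle := hconv.le_on_segment (Set.left_mem_Icc.2 hzT)
      (Set.right_mem_Icc.2 hzT) hmem
    simp only [h0, mul_zero] at hle
    have : ε * uu n α (z+1) ≤ ε * uu n α T := le_trans hle (by
      apply max_le (le_of_lt ?_) (le_refl _)
      exact hsgn T (by simp only [Set.mem_Ioi]; linarith))
    linarith [hT1]
  rcases hdich with hpos | hneg
  · exact key 1 (fun x hx => by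
      rw [one_mul]
      exact sign_dichotomy n α hα (convex_Ioi z) hne' hx0 hpos x hx)
  · refine key (-1) (fun x hx => ?_)
    by_contra hle
    push_neg at hle
    have hlt : 0 < uu n α x := by
      rcases (hne' x hx).lt_or_gt with h | h
      · nlinarith
      · exact h
    have := sign_dichotomy n α hα (convex_Ioi z) hne' hx hlt _ hx0
    linarith

lemma exists_zero_window (n : ℕ) (α : ℝ) (hα : α > -1) {c δ : ℝ} (hc : 0 < c) (hδ : 0 < δ)
    (hQ : ∀ x ∈ Set.Icc c (c + Real.pi/δ), δ^2 ≤ Qf n α x) :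
    ∃ x ∈ Set.Icc c (c + Real.pi/δ), uu n α x = 0 := by
  by_contra hno
  push_neg at hno
  set d := c + Real.pi/δ with hd
  have hπ := Real.pi_pos
  have hcd : c < d := by rw [hd]; have : 0 < Real.pi/δ := by positivity
                         linarith
  have hδdc : δ * (d - c) = Real.pi := by
    rw [hd]; field_simp; ring
  have key : ∀ ε : ℝ, (∀ x ∈ Set.Icc c d, 0 < ε * uu n α x) → False := by
    intro ε hsgn
    set W : ℝ → ℝ := fun y => (ε * uu n α y) * (δ * Real.cos (δ*(y - c)))
      - (ε * du n α y) * Real.sin (δ*(y - c)) with hW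
    have hWd : ∀ x ∈ Set.Icc c d, HasDerivAt W
        ((ε * uu n α x) * Real.sin (δ*(x-c)) * (Qf n α x - δ^2)) x := by
      intro x hx
      have hx0 : 0 < x := lt_of_lt_of_le hc hx.1
      have hlin : HasDerivAt (fun y : ℝ => δ*(y - c)) δ x := by
        simpa using ((hasDerivAt_id x).sub_const c).const_mul δ
      have h1 : HasDerivAt (fun y => ε * uu n α y) (ε * du n α x) x :=
        (hasDerivAt_uu n α hx0).const_mul ε
      have h3 : HasDerivAt (fun y => ε * du n α y) (ε * (-(Qf n α x) * uu n α x)) x :=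
        (hasDerivAt_du n α hα hx0).const_mul ε
      have h4 : HasDerivAt (fun y : ℝ => Real.sin (δ*(y-c))) (Real.cos (δ*(x-c)) * δ) x :=
        by have := (Real.hasDerivAt_sin (δ*(x-c))).comp x hlin; exact this
      have h5 : HasDerivAt (fun y : ℝ => Real.cos (δ*(y-c))) (-Real.sin (δ*(x-c)) * δ) x :=
        by have := (Real.hasDerivAt_cos (δ*(x-c))).comp x hlin; exact this
      have h2 : HasDerivAt (fun y : ℝ => δ * Real.cos (δ*(y-c))) (δ * (-Real.sin (δ*(x-c)) * δ)) x :=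
        h5.const_mul δ
      have := (h1.mul h2).sub (h3.mul h4)
      refine this.congr_deriv ?_
      ring
    have hmono : MonotoneOn W (Set.Icc c d) := by
      apply monotoneOn_of_deriv_nonneg (convex_Icc c d)
      · exact fun x hx => (hWd x hx).continuousAt.continuousWithinAt
      · rw [interior_Icc]
        exact fun x hx => (hWd x (Set.mem_Icc_of_Ioo hx)).differentiableAt.differentiableWithinAt
      · rw [interior_Icc]
        intro x hx
        rw [(hWd x (Set.mem_Icc_of_Ioo hx)).deriv]
        have hsin : 0 ≤ Real.sin (δ*(x-c)) := by
          apply Real.sin_nonneg_of_nonneg_of_le_pi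
          · have := hx.1; nlinarith
          · have := hx.2
            calc δ*(x-c) ≤ δ*(d-c) := by nlinarith
            _ = Real.pi := hδdc
        have hq := hQ x (Set.mem_Icc_of_Ioo hx)
        have hu := hsgn x (Set.mem_Icc_of_Ioo hx)
        have : 0 ≤ Qf n α x - δ^2 := by linarith
        positivity
    have hWc : W c = δ * (ε * uu n α c) := by
      rw [hW]; simp; ring
    have hWdv : W d = -(δ * (ε * uu n α d)) := by
      rw [hW]
      simp only [show δ*(d-c) = Real.pi from hδdc, Real.cos_pi, Real.sin_pi]
      ring
    have hle := hmono (Set.left_mem_Icc.2 hcd.le) (Set.right_mem_Icc.2 hcd.le) hcd.le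
    rw [hWc, hWdv] at hle
    have h1 := hsgn c (Set.left_mem_Icc.2 hcd.le)
    have h2 := hsgn d (Set.right_mem_Icc.2 hcd.le)
    nlinarith
  have hcm : c ∈ Set.Icc c d := Set.left_mem_Icc.2 hcd.le
  rcases (hno c hcm).lt_or_gt.symm with hpos | hneg
  · exact key 1 (fun x hx => by
      rw [one_mul]
      exact sign_dichotomy n α hα (convex_Icc c d) hno hcm hpos x hx)
  · refine key (-1) (fun x hx => ?_)
    by_contra hle
    push_neg at hle
    have hlt : 0 < uu n α x := by
      rcases (hno x hx).lt_or_gt with h | h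
      · nlinarith
      · exact h
    have := sign_dichotomy n α hα (convex_Icc c d) hno hx hlt _ hcm
    linarith

noncomputable def Bv (n : ℕ) (α : ℝ) : ℝ := 2*(n:ℝ) + α + 1
noncomputable def Dv (n : ℕ) (α : ℝ) : ℝ := Bv n α ^ 2 + 1 - α^2
noncomputable def Xp (n : ℕ) (α : ℝ) : ℝ := Bv n α + Real.sqrt (Dv n α)
noncomputable def Xm (n : ℕ) (α : ℝ) : ℝ := Bv n α - Real.sqrt (Dv n α)

lemma Bv_pos {n : ℕ} {α : ℝ} (hα : α > -1) : 0 < Bv n α := by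
  unfold Bv
  have : (0:ℝ) ≤ n := Nat.cast_nonneg n
  linarith

lemma Qf_eq (n : ℕ) (α : ℝ) {x : ℝ} (hx : 0 < x) :
    Qf n α x = (2 * Bv n α * x - x^2 + (1 - α^2)) / (4*x^2) := by
  unfold Qf Bv
  field_simp
  ring

lemma Qf_neg_right {n : ℕ} {α : ℝ} (hα : α > -1) {x : ℝ} (hx : Xp n α < x) :
    Qf n α x ≤ 0 := by
  have hB := Bv_pos (n := n) hα
  have hs : 0 ≤ Real.sqrt (Dv n α) := Real.sqrt_nonneg _
  have hx0 : 0 < x := by unfold Xp at hx; linarith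
  have hy : 0 < x - Bv n α := by unfold Xp at hx; linarith
  have hy2 : Dv n α < (x - Bv n α)^2 := by
    rw [← Real.sqrt_lt' hy]  -- sqrt (Dv) < x - Bv ↔ Dv < (x-Bv)^2
    unfold Xp at hx; linarith
  rw [Qf_eq n α hx0]
  apply div_nonpos_of_nonpos_of_nonneg
  · unfold Dv at hy2; nlinarith
  · positivity

lemma Qf_neg_left {n : ℕ} {α : ℝ} (hα : α > -1) {x : ℝ} (hx0 : 0 < x) (hx : x < Xm n α) :
    Qf n α x ≤ 0 := by
  have hs : 0 ≤ Real.sqrt (Dv n α) := Real.sqrt_nonneg _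
  have hy : 0 < Bv n α - x := by unfold Xm at hx; linarith
  have hy2 : Dv n α < (Bv n α - x)^2 := by
    rw [← Real.sqrt_lt' hy]
    unfold Xm at hx; linarith
  rw [Qf_eq n α hx0]
  apply div_nonpos_of_nonpos_of_nonneg
  · unfold Dv at hy2; nlinarith
  · positivity

lemma laguerre_zero_iff_uu {n : ℕ} {α : ℝ} {x : ℝ} (hx : 0 < x) :
    laguerreL n α x = 0 ↔ uu n α x = 0 := by
  rw [uu_eq_zero_iff n α hx, eval_P]

lemma s_le_Xp {n : ℕ} {α : ℝ} (hα : α > -1) {s : ℝ}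
    (hs : IsGreatest {x : ℝ | laguerreL n α x = 0} s) : s ≤ Xp n α := by
  by_contra h
  push_neg at h
  have hs0 : 0 < s := zero_pos hα hs.1
  apply contradiction_beyond n α hα hs0
  · exact (laguerre_zero_iff_uu hs0).1 hs.1
  · intro x hx
    have hx0 : 0 < x := lt_trans hs0 hx
    intro h0
    have : laguerreL n α x = 0 := (laguerre_zero_iff_uu hx0).2 h0
    have := hs.2 this
    linarith
  · intro x hx
    exact Qf_neg_right hα (by linarith)

lemma Xm_le_r {n : ℕ} {α : ℝ} (hα : α > -1) {r : ℝ}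
    (hr : IsLeast {x : ℝ | laguerreL n α x = 0} r) : Xm n α ≤ r := by
  have hr0 : 0 < r := zero_pos hα hr.1
  rcases le_or_gt (Xm n α) 0 with h | h
  · linarith
  · by_contra hc
    push_neg at hc
    apply contradiction_below n α hα hr0
    · exact (laguerre_zero_iff_uu hr0).1 hr.1
    · intro x hx h0
      have : laguerreL n α x = 0 := (laguerre_zero_iff_uu hx.1).2 h0
      have := hr.2 this
      linarith [hx.2]
    · intro x hx
      exact Qf_neg_left hα hx.1 (by linarith [hx.2])

section Asymp

variable {α : ℕ → ℝ} {a : ℝ}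

lemma lim_B (hαlim : Tendsto (fun n : ℕ => α n / n) atTop (𝓝 a)) :
    Tendsto (fun n : ℕ => Bv n (α n) / n) atTop (𝓝 (2 + a)) := by
  have h : (fun n : ℕ => 2 + α n / n + 1/n) =ᶠ[atTop] (fun n : ℕ => Bv n (α n) / n) := by
    filter_upwards [eventually_ge_atTop 1] with n hn
    have hn0 : (n:ℝ) ≠ 0 := Nat.cast_ne_zero.2 (by omega)
    unfold Bv
    field_simp
  have h2 : Tendsto (fun n : ℕ => 2 + α n / n + 1/n) atTop (𝓝 (2 + a + 0)) :=
    (tendsto_const_nhds.add hαlim).add tendsto_one_div_atTop_nhds_zero_nat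
  rw [add_zero] at h2
  exact h2.congr' h

lemma lim_D (hαlim : Tendsto (fun n : ℕ => α n / n) atTop (𝓝 a)) :
    Tendsto (fun n : ℕ => Dv n (α n) / (n:ℝ)^2) atTop (𝓝 (4 + 4*a)) := by
  have h : (fun n : ℕ => (Bv n (α n)/n)^2 + ((1/n)^2 - (α n/n)^2)) =ᶠ[atTop]
      (fun n : ℕ => Dv n (α n) / (n:ℝ)^2) := by
    filter_upwards [eventually_ge_atTop 1] with n hn
    have hn0 : (n:ℝ) ≠ 0 := Nat.cast_ne_zero.2 (by omega)
    unfold Dv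
    field_simp
    try ring
  have h2 : Tendsto (fun n : ℕ => (Bv n (α n)/n)^2 + ((1/n)^2 - (α n/n)^2)) atTop
      (𝓝 ((2+a)^2 + ((0:ℝ)^2 - a^2))) :=
    ((lim_B hαlim).pow 2).add
      ((tendsto_one_div_atTop_nhds_zero_nat.pow 2).sub (hαlim.pow 2))
  rw [show ((2+a)^2 + ((0:ℝ)^2 - a^2) : ℝ) = 4 + 4*a by ring] at h2
  exact h2.congr' h

lemma sqrt_lim_val (ha : 0 ≤ a) : Real.sqrt (4 + 4*a) = 2 * Real.sqrt (1+a) := by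
  rw [show (4 + 4*a : ℝ) = 4*(1+a) by ring, Real.sqrt_mul (by norm_num : (0:ℝ) ≤ 4),
    show (4:ℝ) = 2^2 by norm_num, Real.sqrt_sq (by norm_num : (0:ℝ) ≤ 2)]

lemma lim_sqrtD (ha : 0 ≤ a) (hαlim : Tendsto (fun n : ℕ => α n / n) atTop (𝓝 a)) :
    Tendsto (fun n : ℕ => Real.sqrt (Dv n (α n)) / n) atTop (𝓝 (2 * Real.sqrt (1+a))) := by
  have h : (fun n : ℕ => Real.sqrt (Dv n (α n) / (n:ℝ)^2)) =ᶠ[atTop]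
      (fun n : ℕ => Real.sqrt (Dv n (α n)) / n) := by
    filter_upwards [eventually_ge_atTop 1] with n hn
    rw [Real.sqrt_div' _ (by positivity : (0:ℝ) ≤ (n:ℝ)^2), Real.sqrt_sq (Nat.cast_nonneg n)]
  have := (lim_D hαlim).sqrt
  rw [sqrt_lim_val ha] at this
  exact this.congr' h

lemma lim_Xp (ha : 0 ≤ a) (hαlim : Tendsto (fun n : ℕ => α n / n) atTop (𝓝 a)) :
    Tendsto (fun n : ℕ => Xp n (α n) / n) atTop (𝓝 (2 + a + 2*Real.sqrt (1+a))) := by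
  have h : (fun n : ℕ => Bv n (α n)/n + Real.sqrt (Dv n (α n))/n) =ᶠ[atTop]
      (fun n : ℕ => Xp n (α n) / n) := by
    filter_upwards with n
    unfold Xp
    ring
  exact ((lim_B hαlim).add (lim_sqrtD ha hαlim)).congr' h

lemma lim_Xm (ha : 0 ≤ a) (hαlim : Tendsto (fun n : ℕ => α n / n) atTop (𝓝 a)) :
    Tendsto (fun n : ℕ => Xm n (α n) / n) atTop (𝓝 (2 + a - 2*Real.sqrt (1+a))) := by
  have h : (fun n : ℕ => Bv n (α n)/n - Real.sqrt (Dv n (α n))/n) =ᶠ[atTop]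
      (fun n : ℕ => Xm n (α n) / n) := by
    filter_upwards with n
    unfold Xm
    ring
  exact ((lim_B hαlim).sub (lim_sqrtD ha hαlim)).congr' h

end Asymp

section Win

variable {α : ℕ → ℝ} {a : ℝ}

lemma m_minus_nonneg (ha : 0 ≤ a) : 0 ≤ 2 + a - 2*Real.sqrt (1+a) := by
  have hs : Real.sqrt (1+a) ^ 2 = 1 + a := Real.sq_sqrt (by linarith)
  nlinarith [sq_nonneg (Real.sqrt (1+a) - 1)]

lemma m_lt (ha : 0 ≤ a) : 2 + a - 2*Real.sqrt (1+a) < 2 + a + 2*Real.sqrt (1+a) := by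
  have hs : Real.sqrt (1+a) ^ 2 = 1 + a := Real.sq_sqrt (by linarith)
  have : 0 < Real.sqrt (1+a) := Real.sqrt_pos.2 (by linarith)
  linarith

lemma qt_pos (ha : 0 ≤ a) {t : ℝ} (h1 : 2 + a - 2*Real.sqrt (1+a) < t)
    (h2 : t < 2 + a + 2*Real.sqrt (1+a)) :
    0 < t ∧ 0 < -(1:ℝ)/4 + (2+a)/(2*t) - a^2/(4*t^2) := by
  have hs : Real.sqrt (1+a) ^ 2 = 1 + a := Real.sq_sqrt (by linarith)
  have ht0 : 0 < t := lt_of_le_of_lt (m_minus_nonneg ha) h1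
  refine ⟨ht0, ?_⟩
  have hnum : 0 < -t^2 + 2*(2+a)*t - a^2 := by
    nlinarith [mul_pos (sub_pos.2 h1) (sub_pos.2 h2)]
  have heq : -(1:ℝ)/4 + (2+a)/(2*t) - a^2/(4*t^2) = (-t^2 + 2*(2+a)*t - a^2)/(4*t^2) := by
    field_simp
    ring
  rw [heq]
  positivity

lemma Qf_ge {n : ℕ} {αv : ℝ} (hαv : αv > -1) {u v x : ℝ} (hu : 0 < u)
    (hux : u ≤ x) (hxv : x ≤ v) :
    -(1:ℝ)/4 + Bv n αv/(2*v) - αv^2/(4*u^2) ≤ Qf n αv x := by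
  have hx0 : 0 < x := lt_of_lt_of_le hu hux
  have hv0 : 0 < v := lt_of_lt_of_le hx0 hxv
  have e1 : Bv n αv/(2*v) ≤ Bv n αv/(2*x) := by
    gcongr
    exact (Bv_pos hαv).le
  have e2 : (-(αv^2))/(4*u^2) ≤ (1-αv^2)/(4*x^2) := by
    rw [div_le_div_iff₀ (by positivity) (by positivity)]
    have hx2 : u^2 ≤ x^2 := by nlinarith
    nlinarith [mul_nonneg (sq_nonneg αv) (by nlinarith : (0:ℝ) ≤ x^2 - u^2), mul_pos hu hu]
  rw [neg_div] at e2
  have hQf : Qf n αv x = Bv n αv/(2*x) - 1/4 + (1-αv^2)/(4*x^2) := by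
    unfold Qf Bv
    ring
  rw [hQf]
  calc -(1:ℝ)/4 + Bv n αv/(2*v) - αv^2/(4*u^2)
      = (-(1:ℝ)/4 + Bv n αv/(2*v)) + (-(αv^2/(4*u^2))) := by ring
    _ ≤ (-(1:ℝ)/4 + Bv n αv/(2*x)) + ((1-αv^2)/(4*x^2)) :=
        add_le_add (add_le_add le_rfl e1) e2
    _ = Bv n αv/(2*x) - 1/4 + (1-αv^2)/(4*x^2) := by ring

lemma eventually_zero_window (hα : ∀ n, α n > -1) (ha : 0 ≤ a)
    (hαlim : Tendsto (fun n : ℕ => α n / n) atTop (𝓝 a))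
    {t ε : ℝ} (hε : 0 < ε)
    (h1 : 2 + a - 2*Real.sqrt (1+a) < t) (h2 : t < 2 + a + 2*Real.sqrt (1+a)) :
    ∀ᶠ n : ℕ in atTop, ∃ x, laguerreL n (α n) x = 0 ∧ (t - ε)*n ≤ x ∧ x ≤ t*n := by
  obtain ⟨ht0, hq⟩ := qt_pos ha h1 h2
  have hFc : ContinuousAt (fun e : ℝ => -(1:ℝ)/4 + (2+a)/(2*t) - a^2/(4*(t-e)^2)) 0 := by
    apply ContinuousAt.sub
    · exact continuousAt_const
    · exact ContinuousAt.div continuousAt_const (by fun_prop)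
        (by simpa using (by positivity : (0:ℝ) < 4*t^2).ne')
  have hF0 : (0:ℝ) < -(1:ℝ)/4 + (2+a)/(2*t) - a^2/(4*(t-(0:ℝ))^2) := by simpa using hq
  have hev : ∀ᶠ e in 𝓝 (0:ℝ), 0 < -(1:ℝ)/4 + (2+a)/(2*t) - a^2/(4*(t-e)^2) :=
    hFc.eventually (eventually_gt_nhds hF0)
  obtain ⟨ρ, hρ, hball⟩ := Metric.eventually_nhds_iff.1 hev
  obtain ⟨e, he0, heρ, heε, het⟩ : ∃ e : ℝ, 0 < e ∧ e < ρ ∧ e < ε ∧ e ≤ t/2 := by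
    refine ⟨min (ρ/2) (min (ε/2) (t/2)), ?_, ?_, ?_, ?_⟩
    · apply lt_min (by linarith)
      exact lt_min (by linarith) (by linarith)
    · exact lt_of_le_of_lt (min_le_left _ _) (by linarith)
    · exact lt_of_le_of_lt ((min_le_right _ _).trans (min_le_left _ _)) (by linarith)
    · exact (min_le_right _ _).trans (min_le_right _ _)
  have hqm0 : (0:ℝ) < -(1:ℝ)/4 + (2+a)/(2*t) - a^2/(4*(t-e)^2) := hball (by
    rw [Real.dist_eq, sub_zero, abs_of_pos he0]; exact heρ)
  have hlim : Tendsto (fun n : ℕ => -(1:ℝ)/4 + (Bv n (α n)/n)/(2*t) - (α n/n)^2/(4*(t-e)^2))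
      atTop (𝓝 (-(1:ℝ)/4 + (2+a)/(2*t) - a^2/(4*(t-e)^2))) :=
    (tendsto_const_nhds.add ((lim_B hαlim).div_const _)).sub ((hαlim.pow 2).div_const _)
  -- make the limit value opaque
  obtain ⟨qm, hqmdef⟩ : ∃ q : ℝ, -(1:ℝ)/4 + (2+a)/(2*t) - a^2/(4*(t-e)^2) = q := ⟨_, rfl⟩
  rw [hqmdef] at hqm0 hlim
  have ht₁0 : 0 < t - e := by linarith
  obtain ⟨δ, hδ, hδ2⟩ : ∃ δ : ℝ, 0 < δ ∧ δ^2 = qm/2 :=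
    ⟨Real.sqrt (qm/2), Real.sqrt_pos.2 (by linarith), Real.sq_sqrt (by linarith)⟩
  have hGn : ∀ᶠ n : ℕ in atTop,
      qm/2 ≤ -(1:ℝ)/4 + (Bv n (α n)/n)/(2*t) - (α n/n)^2/(4*(t-e)^2) :=
    hlim.eventually (eventually_ge_nhds (by linarith))
  have hn2 : ∀ᶠ n : ℕ in atTop, Real.pi/(δ*e) ≤ (n:ℝ) :=
    tendsto_natCast_atTop_atTop.eventually (eventually_ge_atTop _)
  filter_upwards [hGn, hn2, eventually_ge_atTop 1] with n hGn hn2 hn1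
  have hn0 : (0:ℝ) < n := by exact_mod_cast Nat.pos_of_ne_zero (by omega)
  have hc0 : 0 < (t-e) * n := by positivity
  have hwin : Real.pi/δ ≤ e * n := by
    rw [div_le_iff₀ hδ]
    rw [div_le_iff₀ (by positivity : (0:ℝ) < δ*e)] at hn2
    calc Real.pi ≤ (n:ℝ) * (δ * e) := hn2
    _ = e * n * δ := by ring
  have hQ : ∀ x ∈ Set.Icc ((t-e)*n) ((t-e)*n + Real.pi/δ), δ^2 ≤ Qf n (α n) x := by
    intro x hx
    have hx1 : (t-e) * n ≤ x := hx.1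
    have hx2 : x ≤ t * n := by
      have h5 : (t-e)*n + e*n = t*n := by ring
      linarith [hx.2]
    have hkey := Qf_ge (n := n) (hα n) hc0 hx1 hx2
    have halg : -(1:ℝ)/4 + Bv n (α n)/(2*(t*n)) - (α n)^2/(4*((t-e)*n)^2)
        = -(1:ℝ)/4 + (Bv n (α n)/n)/(2*t) - (α n/n)^2/(4*(t-e)^2) := by
      field_simp
    rw [halg] at hkey
    rw [hδ2]
    linarith
  obtain ⟨x, hxmem, hxzero⟩ := exists_zero_window n (α n) (hα n) hc0 hδ hQ
  have hxpos : 0 < x := lt_of_lt_of_le hc0 hxmem.1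
  refine ⟨x, (laguerre_zero_iff_uu hxpos).2 hxzero, ?_, ?_⟩
  · calc (t - ε)*n ≤ (t-e) * n := by
          apply mul_le_mul_of_nonneg_right _ hn0.le
          linarith
    _ ≤ x := hxmem.1
  · calc x ≤ (t-e)*n + Real.pi/δ := hxmem.2
    _ ≤ (t-e)*n + e*n := by linarith
    _ = t*n := by ring

end Win

lemma tend_upper {f g : ℕ → ℝ} {A : ℝ} (hg : Tendsto g atTop (𝓝 A))
    (hfg : ∀ᶠ n in atTop, f n ≤ g n) (hlow : ∀ t, t < A → ∀ᶠ n in atTop, t ≤ f n) :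
    Tendsto f atTop (𝓝 A) := by
  rw [tendsto_order]
  constructor
  · intro t ht
    filter_upwards [hlow ((t+A)/2) (by linarith)] with n h
    linarith
  · intro t ht
    filter_upwards [hfg, hg.eventually (eventually_lt_nhds ht)] with n h1 h2
    linarith

lemma tend_lower {f g : ℕ → ℝ} {A : ℝ} (hg : Tendsto g atTop (𝓝 A))
    (hfg : ∀ᶠ n in atTop, g n ≤ f n) (hupp : ∀ t, A < t → ∀ᶠ n in atTop, f n ≤ t) :
    Tendsto f atTop (𝓝 A) := by
  rw [tendsto_order]
  constructor
  · intro t ht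
    filter_upwards [hfg, hg.eventually (eventually_gt_nhds ht)] with n h1 h2
    linarith
  · intro t ht
    filter_upwards [hupp ((A+t)/2) (by linarith)] with n h
    linarith

end Lag

theorem stmt13 (α : ℕ → ℝ) (a : ℝ) (ha : 0 ≤ a)
    (hα : ∀ n, α n > -1)
    (hαlim : Tendsto (fun n : ℕ => α n / n) atTop (𝓝 a))
    (r s : ℕ → ℝ)
    (hr : ∀ n : ℕ, 1 ≤ n → IsLeast {x : ℝ | laguerreL n (α n) x = 0} (r n))
    (hs : ∀ n : ℕ, 1 ≤ n → IsGreatest {x : ℝ | laguerreL n (α n) x = 0} (s n)) :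
    Tendsto (fun n : ℕ => s n / n) atTop (𝓝 (2 + a + 2 * Real.sqrt (1 + a))) ∧
    Tendsto (fun n : ℕ => r n / n) atTop (𝓝 (2 + a - 2 * Real.sqrt (1 + a))) ∧
    Set.Icc (2 + a - 2 * Real.sqrt (1 + a)) (2 + a + 2 * Real.sqrt (1 + a)) ⊆
      closure (⋃ n : ℕ, ⋃ _ : 1 ≤ n,
        (fun x => x / (n : ℝ)) '' {x : ℝ | laguerreL n (α n) x = 0}) := by
  set mm := 2 + a - 2 * Real.sqrt (1 + a) with hmm
  set mp := 2 + a + 2 * Real.sqrt (1 + a) with hmp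
  have hmlt : mm < mp := Lag.m_lt ha
  have hmm0 : 0 ≤ mm := Lag.m_minus_nonneg ha
  refine ⟨?_, ?_, ?_⟩
  · -- s n / n → mp
    apply Lag.tend_upper (Lag.lim_Xp ha hαlim)
    · filter_upwards [eventually_ge_atTop 1] with n hn
      have hn0 : (0:ℝ) < n := by exact_mod_cast Nat.pos_of_ne_zero (by omega)
      rw [div_le_div_iff₀ hn0 hn0]
      exact mul_le_mul_of_nonneg_right (Lag.s_le_Xp (hα n) (hs n hn)) hn0.le
    · intro t ht
      set t₂ := max ((mm + mp)/2) ((t + mp)/2) with ht₂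
      have h1 : mm < t₂ := lt_of_lt_of_le (by linarith) (le_max_left _ _)
      have h2 : t₂ < mp := max_lt (by linarith) (by linarith)
      have h3 : t < t₂ := lt_of_lt_of_le (by linarith) (le_max_right _ _)
      filter_upwards [Lag.eventually_zero_window hα ha hαlim (ε := t₂ - t)
        (by linarith) h1 h2, eventually_ge_atTop 1] with n hx hn
      obtain ⟨x, hxz, hx1, hx2⟩ := hx
      have hn0 : (0:ℝ) < n := by exact_mod_cast Nat.pos_of_ne_zero (by omega)
      rw [show t₂ - (t₂ - t) = t by ring] at hx1
      have hsx : x ≤ s n := (hs n hn).2 hxz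
      rw [le_div_iff₀ hn0]
      linarith
  · -- r n / n → mm
    apply Lag.tend_lower (Lag.lim_Xm ha hαlim)
    · filter_upwards [eventually_ge_atTop 1] with n hn
      have hn0 : (0:ℝ) < n := by exact_mod_cast Nat.pos_of_ne_zero (by omega)
      rw [div_le_div_iff₀ hn0 hn0]
      exact mul_le_mul_of_nonneg_right (Lag.Xm_le_r (hα n) (hr n hn)) hn0.le
    · intro t ht
      set t₂ := min ((mm + mp)/2) ((mm + t)/2) with ht₂
      have h1 : mm < t₂ := lt_min (by linarith) (by linarith)
      have h2 : t₂ < mp := lt_of_le_of_lt (min_le_left _ _) (by linarith)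
      have h3 : t₂ < t := lt_of_le_of_lt (min_le_right _ _) (by linarith)
      filter_upwards [Lag.eventually_zero_window hα ha hαlim (ε := 1)
        one_pos h1 h2, eventually_ge_atTop 1] with n hx hn
      obtain ⟨x, hxz, hx1, hx2⟩ := hx
      have hn0 : (0:ℝ) < n := by exact_mod_cast Nat.pos_of_ne_zero (by omega)
      have hrx : r n ≤ x := (hr n hn).2 hxz
      have h4 : t₂ * n ≤ t * n := mul_le_mul_of_nonneg_right h3.le hn0.le
      rw [div_le_iff₀ hn0]
      linarith
  · -- closure
    intro y hy
    rw [Metric.mem_closure_iff]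
    intro ε hε
    set w := min (ε/4) ((mp - mm)/4) with hw
    have hw0 : 0 < w := lt_min (by linarith) (by linarith)
    have hwε : w ≤ ε/4 := min_le_left _ _
    have hwm : w ≤ (mp - mm)/4 := min_le_right _ _
    set t := max (min y (mp - w)) (mm + w) with htdef
    have h1 : mm < t := lt_of_lt_of_le (by linarith) (le_max_right _ _)
    have h2 : t < mp := max_lt (lt_of_le_of_lt (min_le_right _ _) (by linarith)) (by linarith)
    have ht_le : t ≤ y + w := max_le (le_trans (min_le_left _ _) (by linarith))
      (by linarith [hy.1])
    have ht_ge : y - w ≤ t := le_trans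
      (le_min (by linarith) (by linarith [hy.2]) : y - w ≤ min y (mp - w)) (le_max_left _ _)
    obtain ⟨n, hev, hn⟩ :=
      ((Lag.eventually_zero_window hα ha hαlim (ε := w) hw0 h1 h2).and
        (eventually_ge_atTop 1)).exists
    obtain ⟨x, hxz, hx1, hx2⟩ := hev
    have hn0 : (0:ℝ) < n := by exact_mod_cast Nat.pos_of_ne_zero (by omega)
    refine ⟨x / n, ?_, ?_⟩
    · apply Set.mem_iUnion.2
      refine ⟨n, Set.mem_iUnion.2 ⟨hn, ⟨x, hxz, rfl⟩⟩⟩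
    · have hb1 : t - w ≤ x / n := by
        rw [le_div_iff₀ hn0]
        linarith
      have hb2 : x / n ≤ t := by
        rw [div_le_iff₀ hn0]
        linarith
      rw [Real.dist_eq, abs_lt]
      constructor
      · linarith
      · linarith
end

section
/- Let α, β > −1 with α + β > 0, let n ≥ 2 and let k be an integer with 1 ≤ k ≤ n−1. Define s_n(k) = (β²−α²)/((2k−2+α+β)(2k+2+α+β)) + (2/(2k+α+β))·[ ((β²−α²)/((2k−2+α+β)(2k+2+α+β)))² + 4k(k+α)(k+β)(k+α+β)/((2k−1+α+β)(2k+1+α+β)) ]^{1/2}, and define g(α,β) = ((β−α)/(β+α))² and h(α,β) = 4n(n+α)(n+β)(n+α+β)/((α+β+1)(α+β+3)). Then: (i) if β ≥ α, s_n(k) ≤ (β−α)/(β+α) + (2/(2+α+β))·√(g(α,β)+h(α,β)); and (ii) if α ≥ β, s_n(k) ≤ (β²−α²)/((β+α+2n)²) + (2/(2+α+β))·√(g(α,β)+h(α,β)). -/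
/-!
Every ingredient of `s_n(k)` is monotone in the right direction. The coefficient `2/(2k+α+β)` is
largest at `k = 1`; the quartic quotient under the root grows from its value at `k` to `h` when the
numerator is evaluated at `n ≥ k` and the denominator at `k = 1`; and the leading term
`(β²-α²)/((2k-2+α+β)(2k+2+α+β))` is squeezed between the denominators `(α+β)²` and `(α+β+2n)²`,
the bound used depending on the sign of `β² - α²`.
-/

-- `s_n(k) = A + 2 / (2k+α+β) · √(A² + B)` with `A = ismailLiA α β k`, `B = ismailLiB α β k`.
noncomputable def ismailLiA (α β k : ℝ) : ℝ :=
  (β ^ 2 - α ^ 2) / ((2 * k - 2 + α + β) * (2 * k + 2 + α + β))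

noncomputable def ismailLiB (α β k : ℝ) : ℝ :=
  4 * k * (k + α) * (k + β) * (k + α + β) / ((2 * k - 1 + α + β) * (2 * k + 1 + α + β))

section

variable {𝕜 : Type*} [Field 𝕜] [LinearOrder 𝕜] [IsStrictOrderedRing 𝕜]

lemma mul_div_le_div_of_sq_le {x p D : 𝕜} (hx : 0 ≤ x) (hp : 0 < p) (hD : p ^ 2 ≤ D) :
    p * x / D ≤ x / p := by
  rw [div_le_div_iff₀ ((pow_pos hp 2).trans_le hD) hp]
  nlinarith [mul_le_mul_of_nonneg_left hD hx]

lemma abs_mul_div_le_abs_div_of_sq_le {x p D : 𝕜} (hp : 0 < p) (hD : p ^ 2 ≤ D) :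
    |p * x / D| ≤ |x / p| := by
  rw [abs_div, abs_div, abs_mul, abs_of_pos hp, abs_of_pos ((pow_pos hp 2).trans_le hD)]
  exact mul_div_le_div_of_sq_le (abs_nonneg x) hp hD

end

section

variable {α β k : ℝ}

lemma sq_add_le_ismailLi_denom (hab : 0 < α + β) (hk : 1 ≤ k) :
    (β + α) ^ 2 ≤ (2 * k - 2 + α + β) * (2 * k + 2 + α + β) := by
  nlinarith

lemma ismailLi_denom_le_sq {n : ℝ} (hab : 0 < α + β) (hk : 1 ≤ k) (hkn : k ≤ n) :
    (2 * k - 2 + α + β) * (2 * k + 2 + α + β) ≤ (β + α + 2 * n) ^ 2 := by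
  nlinarith

lemma ismailLiA_le_of_le (hab : 0 < α + β) (hk : 1 ≤ k) (hαβ : α ≤ β) :
    ismailLiA α β k ≤ (β - α) / (β + α) := by
  rw [ismailLiA, sq_sub_sq]
  exact mul_div_le_div_of_sq_le (sub_nonneg.2 hαβ) (by linarith)
    (sq_add_le_ismailLi_denom hab hk)

lemma ismailLiA_sq_le (hab : 0 < α + β) (hk : 1 ≤ k) :
    ismailLiA α β k ^ 2 ≤ ((β - α) / (β + α)) ^ 2 := by
  rw [← sq_abs, ← sq_abs ((β - α) / (β + α)), ismailLiA, sq_sub_sq]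
  exact pow_le_pow_left₀ (abs_nonneg _)
    (abs_mul_div_le_abs_div_of_sq_le (by linarith) (sq_add_le_ismailLi_denom hab hk)) 2

lemma ismailLiA_le_of_ge {n : ℝ} (hab : 0 < α + β) (hk : 1 ≤ k) (hkn : k ≤ n) (hβα : β ≤ α) :
    ismailLiA α β k ≤ (β ^ 2 - α ^ 2) / (β + α + 2 * n) ^ 2 := by
  have hnum : 0 ≤ -(β ^ 2 - α ^ 2) := by nlinarith
  have hD := (pow_pos (by linarith : 0 < β + α) 2).trans_le (sq_add_le_ismailLi_denom hab hk)
  have h := div_le_div_of_nonneg_left hnum hD (ismailLi_denom_le_sq hab hk hkn)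
  rwa [neg_div, neg_div, neg_le_neg_iff] at h

lemma ismailLiB_le (hα : -1 < α) (hβ : -1 < β) (hab : 0 < α + β) {n : ℝ}
    (hk : 1 ≤ k) (hkn : k ≤ n) :
    ismailLiB α β k ≤
      4 * n * (n + α) * (n + β) * (n + α + β) / ((α + β + 1) * (α + β + 3)) := by
  have : 0 ≤ k + α := by linarith
  have : 0 ≤ k + β := by linarith
  have : 0 ≤ k + α + β := by linarith
  have : 0 ≤ n := by linarith
  have : 0 ≤ n + α := by linarith
  have : 0 ≤ n + β := by linarith
  have : 0 ≤ n + α + β := by linarith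
  have hnum : 4 * k * (k + α) * (k + β) * (k + α + β) ≤
      4 * n * (n + α) * (n + β) * (n + α + β) := by
    gcongr
  have hden : (α + β + 1) * (α + β + 3) ≤ (2 * k - 1 + α + β) * (2 * k + 1 + α + β) :=
    mul_le_mul (by linarith) (by linarith) (by linarith) (by linarith)
  exact div_le_div₀ (by positivity) hnum (by nlinarith) hden

end

theorem stmt18_general (α β : ℝ) (hα : α > -1) (hβ : β > -1) (hab : α + β > 0)
    (n : ℕ) (k : ℕ) (hk1 : 1 ≤ k) (hk2 : k ≤ n - 1)
    (snk g h : ℝ)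
    (hsnk : snk =
      (β ^ 2 - α ^ 2) / ((2 * (k : ℝ) - 2 + α + β) * (2 * (k : ℝ) + 2 + α + β)) +
      (2 / (2 * (k : ℝ) + α + β)) *
        Real.sqrt (((β ^ 2 - α ^ 2) /
            ((2 * (k : ℝ) - 2 + α + β) * (2 * (k : ℝ) + 2 + α + β))) ^ 2 +
          4 * (k : ℝ) * ((k : ℝ) + α) * ((k : ℝ) + β) * ((k : ℝ) + α + β) /
            ((2 * (k : ℝ) - 1 + α + β) * (2 * (k : ℝ) + 1 + α + β))))
    (hg : g = ((β - α) / (β + α)) ^ 2)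
    (hh : h = 4 * (n : ℝ) * ((n : ℝ) + α) * ((n : ℝ) + β) * ((n : ℝ) + α + β) /
      ((α + β + 1) * (α + β + 3))) :
    (α ≤ β → snk ≤ (β - α) / (β + α) + (2 / (2 + α + β)) * Real.sqrt (g + h)) ∧
    (β ≤ α → snk ≤ (β ^ 2 - α ^ 2) / ((β + α + 2 * (n : ℝ)) ^ 2) +
      (2 / (2 + α + β)) * Real.sqrt (g + h)) := by
  have hk : (1 : ℝ) ≤ k := by exact_mod_cast hk1
  have hkn : (k : ℝ) ≤ n := by exact_mod_cast (by omega : k ≤ n)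
  have hsnk' : snk = ismailLiA α β k + 2 / (2 * k + α + β) *
      √(ismailLiA α β k ^ 2 + ismailLiB α β k) := hsnk
  have hroot : √(ismailLiA α β k ^ 2 + ismailLiB α β k) ≤ √(g + h) := by
    rw [hg, hh]
    exact Real.sqrt_le_sqrt (add_le_add (ismailLiA_sq_le hab hk) (ismailLiB_le hα hβ hab hk hkn))
  have hcoef : 2 / (2 * (k : ℝ) + α + β) ≤ 2 / (2 + α + β) :=
    div_le_div_of_nonneg_left zero_le_two (by linarith) (by linarith)
  have hsnk_le : ∀ a, ismailLiA α β k ≤ a → snk ≤ a + 2 / (2 + α + β) * √(g + h) := by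
    intro a ha
    rw [hsnk']
    exact add_le_add ha
      (mul_le_mul hcoef hroot (Real.sqrt_nonneg _) (div_pos two_pos (by linarith)).le)
  exact ⟨fun hαβ => hsnk_le _ (ismailLiA_le_of_le hab hk hαβ),
    fun hβα => hsnk_le _ (ismailLiA_le_of_ge hab hk hkn hβα)⟩

theorem stmt18 (α β : ℝ) (hα : α > -1) (hβ : β > -1) (hab : α + β > 0)
    (n : ℕ) (hn : 2 ≤ n) (k : ℕ) (hk1 : 1 ≤ k) (hk2 : k ≤ n - 1)
    (snk g h : ℝ)
    (hsnk : snk =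
      (β ^ 2 - α ^ 2) / ((2 * (k : ℝ) - 2 + α + β) * (2 * (k : ℝ) + 2 + α + β)) +
      (2 / (2 * (k : ℝ) + α + β)) *
        Real.sqrt (((β ^ 2 - α ^ 2) /
            ((2 * (k : ℝ) - 2 + α + β) * (2 * (k : ℝ) + 2 + α + β))) ^ 2 +
          4 * (k : ℝ) * ((k : ℝ) + α) * ((k : ℝ) + β) * ((k : ℝ) + α + β) /
            ((2 * (k : ℝ) - 1 + α + β) * (2 * (k : ℝ) + 1 + α + β))))
    (hg : g = ((β - α) / (β + α)) ^ 2)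
    (hh : h = 4 * (n : ℝ) * ((n : ℝ) + α) * ((n : ℝ) + β) * ((n : ℝ) + α + β) /
      ((α + β + 1) * (α + β + 3))) :
    (α ≤ β → snk ≤ (β - α) / (β + α) + (2 / (2 + α + β)) * Real.sqrt (g + h)) ∧
    (β ≤ α → snk ≤ (β ^ 2 - α ^ 2) / ((β + α + 2 * (n : ℝ)) ^ 2) +
      (2 / (2 + α + β)) * Real.sqrt (g + h)) :=
  stmt18_general α β hα hβ hab n k hk1 hk2 snk g h hsnk hg hh
end
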